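/- The embedded Werner state W_μ on C³⊗C² is separable if μ ≤ 1/3: explicitly, for μ ≤ 1/3 it can be written as a convex combination of product states. -/

import Mathlib

open Matrix Kronecker
open scoped ComplexOrder

noncomputable section

/-- Outer product |v⟩⟨v|. -/
def outer {n : Type*} (v : n → ℂ) : Matrix n n ℂ :=
  Matrix.of fun i j => v i * star (v j)

/-- The basis vector |2⟩ of the qutrit. -/
def ket2 : Fin 3 → ℂ := fun i => if i = 2 then 1 else 0

/-- The singlet |ψ₋⟩ = (|0,1⟩ − |1,0⟩)/√2 embedded in C³ ⊗ C². -/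
def psiMinus : Fin 3 × Fin 2 → ℂ := fun p =>
  if p = ((0 : Fin 3), (1 : Fin 2)) then (Real.sqrt 2 : ℂ)⁻¹
  else if p = ((1 : Fin 3), (0 : Fin 2)) then -(Real.sqrt 2 : ℂ)⁻¹ else 0

/-- Π = |0⟩⟨0| + |1⟩⟨1| on the qutrit. -/
def Pi3 : Matrix (Fin 3) (Fin 3) ℂ := 1 - outer ket2

/-- The embedded Werner state W_μ on C³ ⊗ C². -/
def Werner (μ : ℝ) : Matrix (Fin 3 × Fin 2) (Fin 3 × Fin 2) ℂ :=
  (μ : ℂ) • outer psiMinus +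
    (((1 - μ) / 4 : ℝ) : ℂ) • (Pi3 ⊗ₖ (1 : Matrix (Fin 2) (Fin 2) ℂ))

/-- The state ρ_{μ,q} = q W_μ + (1−q) |2⟩⟨2| ⊗ I/2. -/
def rho (μ q : ℝ) : Matrix (Fin 3 × Fin 2) (Fin 3 × Fin 2) ℂ :=
  (q : ℂ) • Werner μ +
    (((1 - q) / 2 : ℝ) : ℂ) • (outer ket2 ⊗ₖ (1 : Matrix (Fin 2) (Fin 2) ℂ))

/-- Partial trace over the first (qutrit) factor. -/
def ptrA (M : Matrix (Fin 3 × Fin 2) (Fin 3 × Fin 2) ℂ) : Matrix (Fin 2) (Fin 2) ℂ :=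
  Matrix.of fun i j => ∑ a : Fin 3, M (a, i) (a, j)

/-! ### Auxiliary definitions and lemmas -/

def e0 : Fin 3 → ℂ := fun i => if i = 0 then 1 else 0
def e1 : Fin 3 → ℂ := fun i => if i = 1 then 1 else 0
def g0 : Fin 2 → ℂ := fun k => if k = 0 then 1 else 0
def g1 : Fin 2 → ℂ := fun k => if k = 1 then 1 else 0
def va (c : ℂ) : Fin 3 → ℂ := fun i => if i = 0 then 1 else if i = 1 then c else 0
def vb (c : ℂ) : Fin 2 → ℂ := fun k => if k = 0 then 1 else c

lemma outer_posSemidef {n : Type*} [Fintype n] (v : n → ℂ) : (outer v).PosSemidef := by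
  refine Matrix.PosSemidef.of_dotProduct_mulVec_nonneg ?_ fun x => ?_
  · ext i j
    simp [outer, Matrix.conjTranspose_apply, mul_comm]
  · have h : star x ⬝ᵥ (outer v).mulVec x
        = star (star v ⬝ᵥ x) * (star v ⬝ᵥ x) := by
      simp only [outer, Matrix.mulVec, dotProduct, Matrix.of_apply, Pi.star_apply,
        star_sum, StarMul.star_mul, star_star, Finset.sum_mul, Finset.mul_sum]
      rw [Finset.sum_comm]
      refine Finset.sum_congr rfl fun i _ => Finset.sum_congr rfl fun j _ => by ring
    rw [h]
    exact star_mul_self_nonneg _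

lemma smul_psd {n : Type*} [Fintype n] {c : ℝ} (hc : 0 ≤ c) {M : Matrix n n ℂ}
    (hM : M.PosSemidef) : ((c : ℂ) • M).PosSemidef := by
  refine Matrix.PosSemidef.of_dotProduct_mulVec_nonneg ?_ fun x => ?_
  · unfold Matrix.IsHermitian
    rw [Matrix.conjTranspose_smul, hM.1]
    congr 1
    simp [Complex.star_def, Complex.conj_ofReal]
  · rw [Matrix.smul_mulVec, dotProduct_smul, smul_eq_mul]
    exact mul_nonneg (by exact_mod_cast hc) (hM.dotProduct_mulVec_nonneg x)

lemma Pi3_eq : Pi3 = outer e0 + outer e1 := by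
  ext i j
  fin_cases i <;> fin_cases j <;>
    simp [Pi3, outer, ket2, e0, e1, Matrix.one_apply, Fin.ext_iff, -Fin.val_eq_zero_iff]

set_option maxHeartbeats 2000000 in
theorem Werner_separable (μ : ℝ) (h0 : 0 ≤ μ) (h1 : μ ≤ 1/3) :
    Werner μ ∈ convexHull ℝ
      {M : Matrix (Fin 3 × Fin 2) (Fin 3 × Fin 2) ℂ |
        ∃ (A : Matrix (Fin 3) (Fin 3) ℂ) (B : Matrix (Fin 2) (Fin 2) ℂ),
          A.PosSemidef ∧ A.trace = 1 ∧ B.PosSemidef ∧ B.trace = 1 ∧ M = A ⊗ₖ B} := by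
  set S := {M : Matrix (Fin 3 × Fin 2) (Fin 3 × Fin 2) ℂ |
      ∃ (A : Matrix (Fin 3) (Fin 3) ℂ) (B : Matrix (Fin 2) (Fin 2) ℂ),
        A.PosSemidef ∧ A.trace = 1 ∧ B.PosSemidef ∧ B.trace = 1 ∧ M = A ⊗ₖ B} with hS
  have h2 : (0:ℝ) ≤ 1/2 := by norm_num
  let As : Fin 7 → Matrix (Fin 3) (Fin 3) ℂ := fun i =>
    if i = 0 then ((1/2 : ℝ) : ℂ) • Pi3
    else if i = 1 then outer e0
    else if i = 2 then outer e1
    else if i = 3 then ((1/2 : ℝ) : ℂ) • outer (va 1)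
    else if i = 4 then ((1/2 : ℝ) : ℂ) • outer (va (-1))
    else if i = 5 then ((1/2 : ℝ) : ℂ) • outer (va Complex.I)
    else ((1/2 : ℝ) : ℂ) • outer (va (-Complex.I))
  let Bs : Fin 7 → Matrix (Fin 2) (Fin 2) ℂ := fun i =>
    if i = 0 then ((1/2 : ℝ) : ℂ) • (1 : Matrix (Fin 2) (Fin 2) ℂ)
    else if i = 1 then outer g1
    else if i = 2 then outer g0
    else if i = 3 then ((1/2 : ℝ) : ℂ) • outer (vb (-1))
    else if i = 4 then ((1/2 : ℝ) : ℂ) • outer (vb 1)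
    else if i = 5 then ((1/2 : ℝ) : ℂ) • outer (vb (-Complex.I))
    else ((1/2 : ℝ) : ℂ) • outer (vb Complex.I)
  let w : Fin 7 → ℝ := fun i => if i = 0 then 1 - 3*μ else μ/2
  have hw : ∀ i ∈ Finset.univ, 0 ≤ w i := by
    intro i _
    by_cases h : i = 0 <;> simp [w, h] <;> linarith
  have hwsum : ∑ i ∈ Finset.univ, w i = 1 := by
    simp [w, Fin.sum_univ_seven]
    ring
  have hPi : (((1/2 : ℝ) : ℂ) • Pi3).PosSemidef := by
    rw [Pi3_eq]
    exact smul_psd h2 ((outer_posSemidef e0).add (outer_posSemidef e1))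
  have tr_outer : ∀ {n : Type} [Fintype n] (v : n → ℂ),
      (outer v).trace = ∑ x, v x * star (v x) := by
    intro n _ v
    simp [Matrix.trace, outer, Matrix.diag]
  have hmemA : ∀ i : Fin 7, (As i).PosSemidef ∧ (As i).trace = 1 := by
    intro i
    fin_cases i
    · refine ⟨hPi, ?_⟩
      show Matrix.trace (((1/2 : ℝ) : ℂ) • Pi3) = 1
      norm_num [Pi3, Matrix.trace, Matrix.diag, Fin.sum_univ_three, outer, ket2,
        Matrix.one_apply, Matrix.smul_apply, Fin.ext_iff]
    · refine ⟨outer_posSemidef e0, ?_⟩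
      show Matrix.trace (outer e0) = 1
      rw [tr_outer]; norm_num [Fin.sum_univ_three, e0, Fin.ext_iff, -Fin.val_eq_zero_iff]
    · refine ⟨outer_posSemidef e1, ?_⟩
      show Matrix.trace (outer e1) = 1
      rw [tr_outer]; norm_num [Fin.sum_univ_three, e1, Fin.ext_iff, -Fin.val_eq_zero_iff]
    · refine ⟨smul_psd h2 (outer_posSemidef _), ?_⟩
      show Matrix.trace (((1/2 : ℝ) : ℂ) • outer (va 1)) = 1
      rw [Matrix.trace_smul, tr_outer]; norm_num [Fin.sum_univ_three, va, Fin.ext_iff, -Fin.val_eq_zero_iff]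
    · refine ⟨smul_psd h2 (outer_posSemidef _), ?_⟩
      show Matrix.trace (((1/2 : ℝ) : ℂ) • outer (va (-1))) = 1
      rw [Matrix.trace_smul, tr_outer]; norm_num [Fin.sum_univ_three, va, Fin.ext_iff, -Fin.val_eq_zero_iff]
    · refine ⟨smul_psd h2 (outer_posSemidef _), ?_⟩
      show Matrix.trace (((1/2 : ℝ) : ℂ) • outer (va Complex.I)) = 1
      rw [Matrix.trace_smul, tr_outer]
      norm_num [Fin.sum_univ_three, va, Complex.ext_iff, Fin.ext_iff, -Fin.val_eq_zero_iff]
    · refine ⟨smul_psd h2 (outer_posSemidef _), ?_⟩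
      show Matrix.trace (((1/2 : ℝ) : ℂ) • outer (va (-Complex.I))) = 1
      rw [Matrix.trace_smul, tr_outer]
      norm_num [Fin.sum_univ_three, va, Complex.ext_iff, Fin.ext_iff, -Fin.val_eq_zero_iff]
  have hmemB : ∀ i : Fin 7, (Bs i).PosSemidef ∧ (Bs i).trace = 1 := by
    intro i
    fin_cases i
    · refine ⟨smul_psd h2 Matrix.PosSemidef.one, ?_⟩
      show Matrix.trace (((1/2 : ℝ) : ℂ) • (1 : Matrix (Fin 2) (Fin 2) ℂ)) = 1
      rw [Matrix.trace_smul, Matrix.trace_one]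
      norm_num
    · refine ⟨outer_posSemidef g1, ?_⟩
      show Matrix.trace (outer g1) = 1
      rw [tr_outer]; norm_num [Fin.sum_univ_two, g1, Fin.ext_iff, -Fin.val_eq_zero_iff]
    · refine ⟨outer_posSemidef g0, ?_⟩
      show Matrix.trace (outer g0) = 1
      rw [tr_outer]; norm_num [Fin.sum_univ_two, g0, Fin.ext_iff, -Fin.val_eq_zero_iff]
    · refine ⟨smul_psd h2 (outer_posSemidef _), ?_⟩
      show Matrix.trace (((1/2 : ℝ) : ℂ) • outer (vb (-1))) = 1
      rw [Matrix.trace_smul, tr_outer]; norm_num [Fin.sum_univ_two, vb, Fin.ext_iff, -Fin.val_eq_zero_iff]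
    · refine ⟨smul_psd h2 (outer_posSemidef _), ?_⟩
      show Matrix.trace (((1/2 : ℝ) : ℂ) • outer (vb 1)) = 1
      rw [Matrix.trace_smul, tr_outer]; norm_num [Fin.sum_univ_two, vb, Fin.ext_iff, -Fin.val_eq_zero_iff]
    · refine ⟨smul_psd h2 (outer_posSemidef _), ?_⟩
      show Matrix.trace (((1/2 : ℝ) : ℂ) • outer (vb (-Complex.I))) = 1
      rw [Matrix.trace_smul, tr_outer]
      norm_num [Fin.sum_univ_two, vb, Complex.ext_iff, Fin.ext_iff, -Fin.val_eq_zero_iff]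
    · refine ⟨smul_psd h2 (outer_posSemidef _), ?_⟩
      show Matrix.trace (((1/2 : ℝ) : ℂ) • outer (vb Complex.I)) = 1
      rw [Matrix.trace_smul, tr_outer]
      norm_num [Fin.sum_univ_two, vb, Complex.ext_iff, Fin.ext_iff, -Fin.val_eq_zero_iff]
  have hmem : ∀ i ∈ Finset.univ, (As i ⊗ₖ Bs i) ∈ convexHull ℝ S := fun i _ =>
    subset_convexHull ℝ S ⟨As i, Bs i, (hmemA i).1, (hmemA i).2, (hmemB i).1, (hmemB i).2, rfl⟩
  have hsum := (convex_convexHull ℝ S).sum_mem hw hwsum hmem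
  have hkey : Werner μ = ∑ i ∈ Finset.univ, w i • (As i ⊗ₖ Bs i) := by
    have hs2 : ((Real.sqrt 2 : ℂ))⁻¹ * ((Real.sqrt 2 : ℂ))⁻¹ = 2⁻¹ := by
      rw [← mul_inv, ← Complex.ofReal_mul, Real.mul_self_sqrt (by norm_num)]
      norm_num
    rw [Fin.sum_univ_seven, show w 0 = 1 - 3*μ from rfl, show w 1 = μ/2 from rfl,
      show w 2 = μ/2 from rfl, show w 3 = μ/2 from rfl, show w 4 = μ/2 from rfl,
      show w 5 = μ/2 from rfl, show w 6 = μ/2 from rfl,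
      show As 0 = ((1/2 : ℝ) : ℂ) • Pi3 from rfl,
      show As 1 = outer e0 from rfl, show As 2 = outer e1 from rfl,
      show As 3 = ((1/2 : ℝ) : ℂ) • outer (va 1) from rfl,
      show As 4 = ((1/2 : ℝ) : ℂ) • outer (va (-1)) from rfl,
      show As 5 = ((1/2 : ℝ) : ℂ) • outer (va Complex.I) from rfl,
      show As 6 = ((1/2 : ℝ) : ℂ) • outer (va (-Complex.I)) from rfl,
      show Bs 0 = ((1/2 : ℝ) : ℂ) • (1 : Matrix (Fin 2) (Fin 2) ℂ) from rfl,
      show Bs 1 = outer g1 from rfl, show Bs 2 = outer g0 from rfl,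
      show Bs 3 = ((1/2 : ℝ) : ℂ) • outer (vb (-1)) from rfl,
      show Bs 4 = ((1/2 : ℝ) : ℂ) • outer (vb 1) from rfl,
      show Bs 5 = ((1/2 : ℝ) : ℂ) • outer (vb (-Complex.I)) from rfl,
      show Bs 6 = ((1/2 : ℝ) : ℂ) • outer (vb Complex.I) from rfl]
    ext ⟨i, k⟩ ⟨j, l⟩
    fin_cases i <;> fin_cases j <;> fin_cases k <;> fin_cases l <;>
      · simp only [Werner, outer, psiMinus, Pi3, ket2, e0, e1, g0, g1, va, vb,
          Matrix.add_apply, Matrix.sub_apply, Matrix.smul_apply, Matrix.kroneckerMap_apply,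
          Matrix.one_apply, Matrix.of_apply, Pi.smul_apply, smul_eq_mul, Complex.real_smul]
        norm_num [Complex.star_def, Complex.conj_ofReal, map_inv₀, Complex.conj_I, hs2,
          Prod.ext_iff, Fin.ext_iff]
        try ring_nf
        try norm_num [hs2, Complex.ext_iff]
        try ring
  rw [hkey]
  exact hsum

end
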